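/- arXiv:1605.04722 — 3 statements merged into one kernel-verified Lean document; each statement's English description precedes it below -/
import Mathlib

section
/- Let d be a function on Λ-modules with values in ℕ ∪ {∞} satisfying conditions (d̃1) and (d2). Then d satisfies (d1): for every short exact sequence 0 → K → L → N → 0, if d(L) > d(K) then d(K) = d(N) + 1. -/
universe u

/-- A `d`-function: assigns to every `Λ`-module a value in `ℕ ∪ {∞}`. -/
abbrev DFun (Λ : Type u) [Ring Λ] :=
  (N : Type u) → [AddCommGroup N] → [Module Λ N] → ℕ∞

/-- Condition (d̃1): if `d L > d K` then `d K ≥ d N + 1`. -/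
def CondDt1 (Λ : Type u) [Ring Λ] (d : DFun Λ) : Prop :=
  ∀ (K L N : Type u) [AddCommGroup K] [Module Λ K] [AddCommGroup L] [Module Λ L]
    [AddCommGroup N] [Module Λ N] (f : K →ₗ[Λ] L) (g : L →ₗ[Λ] N),
    Function.Injective f → Function.Surjective g →
    LinearMap.range f = LinearMap.ker g →
    d K < d L → d N + 1 ≤ d K

/-- Condition (d1): if `d L > d K` then `d K = d N + 1`. -/
def CondD1 (Λ : Type u) [Ring Λ] (d : DFun Λ) : Prop :=
  ∀ (K L N : Type u) [AddCommGroup K] [Module Λ K] [AddCommGroup L] [Module Λ L]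
    [AddCommGroup N] [Module Λ N] (f : K →ₗ[Λ] L) (g : L →ₗ[Λ] N),
    Function.Injective f → Function.Surjective g →
    LinearMap.range f = LinearMap.ker g →
    d K < d L → d K = d N + 1

/-- Condition (d2): if `d L > d N` then `d K = d N + 1`. -/
def CondD2 (Λ : Type u) [Ring Λ] (d : DFun Λ) : Prop :=
  ∀ (K L N : Type u) [AddCommGroup K] [Module Λ K] [AddCommGroup L] [Module Λ L]
    [AddCommGroup N] [Module Λ N] (f : K →ₗ[Λ] L) (g : L →ₗ[Λ] N),
    Function.Injective f → Function.Surjective g →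
    LinearMap.range f = LinearMap.ker g →
    d N < d L → d K = d N + 1

/-- If `d` satisfies (d̃1) and (d2) then `d` satisfies (d1). -/
theorem stmt2 (Λ : Type u) [Ring Λ] (d : DFun Λ)
    (h1 : CondDt1 Λ d) (h2 : CondD2 Λ d) : CondD1 Λ d := by
  intro K L N _ _ _ _ _ _ f g hf hg hr hKL
  rcases lt_or_ge (d N) (d L) with hNL | hLN
  · exact h2 K L N f g hf hg hr hNL
  · -- (d̃1) would give `d N + 1 ≤ d K < d L ≤ d N`.
    have hNK : d N + 1 ≤ d K := h1 K L N f g hf hg hr hKL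
    exact absurd (hNK.trans_lt (hKL.trans_le hLN)) (not_lt.2 le_self_add)
end

section
/- Let S be a nonempty set, f : S → ℕ ∪ {∞}, and suppose each d_p (p ∈ S) satisfies (d̃1). Then S̃^f satisfies (d̃1): for every short exact sequence 0 → K → L → N → 0, if S̃^f(L) > S̃^f(K) then S̃^f(K) ≥ S̃^f(N) + 1. -/
universe u v

/-- `S̃^f(N) = sup { i | d_p(N) ≥ min(i, f(p)) for all p ∈ S }`. -/
noncomputable def StildeF (Λ : Type u) [Ring Λ] {S : Type v} (d : S → DFun Λ)
    (f : S → ℕ∞) (N : Type u) [AddCommGroup N] [Module Λ N] : ℕ∞ :=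
  sSup {x : ℕ∞ | ∃ i : ℕ, x = (i : ℕ∞) ∧ ∀ p : S, min (i : ℕ∞) (f p) ≤ d p N}

/-!
`S̃^f(M)` is the least value `d_p(M)` over those `p` with `d_p(M) < f(p)`, and since `ℕ∞` is
well-ordered this least value is attained whenever `S̃^f(M)` is finite. Given `S̃^f(K) < S̃^f(L)`,
choose `q` attaining `S̃^f(K) = d_q(K)`. Then `d_q(L) ≤ d_q(K)` would force `S̃^f(L) ≤ d_q(K)`, so
`d_q(K) < d_q(L)`, and (d̃1) for `d_q` gives `d_q(N) + 1 ≤ d_q(K) < f(q)`; hence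
`S̃^f(N) ≤ d_q(N)`.
-/

section StildeF

variable {Λ : Type u} [Ring Λ] {S : Type v} (d : S → DFun Λ) (f : S → ℕ∞)
  (M : Type u) [AddCommGroup M] [Module Λ M]

theorem stildeF_eq_sInf :
    StildeF Λ d f M = sInf ((fun p => d p M) '' {p | d p M < f p}) := by
  apply le_antisymm
  · refine sSup_le ?_
    rintro _ ⟨i, rfl, hi⟩
    refine le_sInf ?_
    rintro _ ⟨p, hp, rfl⟩
    exact (min_le_iff.mp (hi p)).resolve_right hp.not_ge
  · refine ENat.forall_natCast_le_iff_le.mp fun i hi => le_sSup ⟨i, rfl, fun p => ?_⟩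
    by_cases hp : d p M < f p
    · exact min_le_of_left_le (hi.trans (sInf_le ⟨p, hp, rfl⟩))
    · exact min_le_of_right_le (not_lt.mp hp)

theorem stildeF_le_of_lt {q : S} (hq : d q M < f q) : StildeF Λ d f M ≤ d q M :=
  (stildeF_eq_sInf d f M).trans_le (sInf_le ⟨q, hq, rfl⟩)

theorem exists_eq_stildeF_of_ne_top (h : StildeF Λ d f M ≠ ⊤) :
    ∃ q, d q M < f q ∧ d q M = StildeF Λ d f M := by
  rw [stildeF_eq_sInf] at h ⊢
  have hne : ((fun p => d p M) '' {p | d p M < f p}).Nonempty :=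
    Set.nonempty_iff_ne_empty.mpr fun he => h (by rw [he, sInf_empty])
  exact csInf_mem hne

end StildeF

theorem stmt10_general (Λ : Type u) [Ring Λ] (S : Type v)
    (d : S → DFun Λ) (f : S → ℕ∞) (hd : ∀ p : S, CondDt1 Λ (d p)) :
    CondDt1 Λ (fun N _ _ => StildeF Λ d f N) := by
  intro K L N _ _ _ _ _ _ F G hF hG hFG hKL
  change StildeF Λ d f K < StildeF Λ d f L at hKL
  change StildeF Λ d f N + 1 ≤ StildeF Λ d f K
  obtain ⟨q, hqK, hq⟩ := exists_eq_stildeF_of_ne_top d f K hKL.ne_top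
  have hqKL : d q K < d q L := by
    by_contra! hLK
    exact hKL.not_ge (hq ▸ (stildeF_le_of_lt d f L (hLK.trans_lt hqK)).trans hLK)
  have hqN := hd q K L N F G hF hG hFG hqKL
  calc StildeF Λ d f N + 1 ≤ d q N + 1 := by
        gcongr; exact stildeF_le_of_lt d f N ((le_self_add.trans hqN).trans_lt hqK)
    _ ≤ d q K := hqN
    _ = StildeF Λ d f K := hq

/-- If each `d_p` satisfies (d̃1), then `S̃^f` satisfies (d̃1). -/
theorem stmt10 (Λ : Type u) [Ring Λ] (S : Type v) [Nonempty S]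
    (d : S → DFun Λ) (f : S → ℕ∞) (hd : ∀ p : S, CondDt1 Λ (d p)) :
    CondDt1 Λ (fun N _ _ => StildeF Λ d f N) :=
  stmt10_general Λ S d f hd
end

section
/- Let d be a function on modules over a ring Λ satisfying (d̃1) and (d3). If C is a Λ-module and C' is a direct summand of a finite direct sum of copies of C, then d(C') ≥ d(C); in particular, for the collection d_p satisfying (d̃1) and (d3) for all p in a set S, one has d_p(C') ≥ min(i, d_p(C)) for every integer i and p, so S̃^C(C') = ∞ and i ≤ T^{X_i(C)}(C') for all i, where X_i(C) = { p ∈ S | d_p(C) ≥ i }. -/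
universe u v

/-- Condition (d3): if `d L < d N` then `d K ≤ d L`. -/
def CondD3 (Λ : Type u) [Ring Λ] (d : DFun Λ) : Prop :=
  ∀ (K L N : Type u) [AddCommGroup K] [Module Λ K] [AddCommGroup L] [Module Λ L]
    [AddCommGroup N] [Module Λ N] (f : K →ₗ[Λ] L) (g : L →ₗ[Λ] N),
    Function.Injective f → Function.Surjective g →
    LinearMap.range f = LinearMap.ker g →
    d L < d N → d K ≤ d L

/-- `X` is a direct summand of a finite direct sum of copies of `C`. -/
def IsSummandOfCopies (Λ : Type u) [Ring Λ] (C : Type u) [AddCommGroup C] [Module Λ C]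
    (X : Type u) [AddCommGroup X] [Module Λ X] : Prop :=
  ∃ (k : ℕ) (ι : X →ₗ[Λ] (Fin k → C)) (π : (Fin k → C) →ₗ[Λ] X),
    π.comp ι = LinearMap.id

/-- `T^U(N) = inf { d_p(N) | p ∈ U }` (infimum over the empty set is `∞`). -/
noncomputable def TU (Λ : Type u) [Ring Λ] {S : Type v} (d : S → DFun Λ)
    (U : Set S) (N : Type u) [AddCommGroup N] [Module Λ N] : ℕ∞ :=
  ⨅ p : U, d p N

/-!
By (d̃1), `d` cannot increase when passing from a module to a direct summand of it:
if `L = K ⊕ N` and `d K < d L`, the two sequences `0 → K → L → N → 0` and `0 → N → L → K → 0`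
give `d N < d K` and then `d K < d N`. By (d3), the sequences `0 → C → C^(k+1) → C^k → 0` show
inductively that `d C ≤ d (C^k)`; the base case `k = 0` is again a summand argument, the zero
module being a summand of `C`. Hence `d C ≤ d (C^k) ≤ d C'`, and the remaining claims are
formal consequences of this inequality.
-/

open LinearMap

section DFun

variable {Λ : Type u} [Ring Λ] {d : DFun Λ}
  {K L N : Type u} [AddCommGroup K] [Module Λ K] [AddCommGroup L] [Module Λ L]
  [AddCommGroup N] [Module Λ N]

theorem CondDt1.lt_of_lt (hd : CondDt1 Λ d) (f : K →ₗ[Λ] L) (g : L →ₗ[Λ] N)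
    (hf : Function.Injective f) (hg : Function.Surjective g) (hfg : range f = ker g)
    (h : d K < d L) : d N < d K :=
  (ENat.add_one_le_iff' h.ne_top).mp (hd K L N f g hf hg hfg h)

theorem CondD3.le_of_le (hd : CondD3 Λ d) (f : K →ₗ[Λ] L) (g : L →ₗ[Λ] N)
    (hf : Function.Injective f) (hg : Function.Surjective g) (hfg : range f = ker g)
    (h : d K ≤ d N) : d K ≤ d L := by
  by_contra! hLK
  exact (hd K L N f g hf hg hfg (hLK.trans_le h)).not_gt hLK

theorem CondDt1.le_of_comp_eq_id (hd : CondDt1 Λ d) {π : L →ₗ[Λ] K} {ι : K →ₗ[Λ] L}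
    (h : π ∘ₗ ι = .id) : d L ≤ d K := by
  have hι : Function.LeftInverse π ι := LinearMap.congr_fun h
  -- the complement `ker π` of `range ι`, realised as the range of the projection `id - ι ∘ π`
  set p : L →ₗ[Λ] L := .id - ι ∘ₗ π
  have hker : ker p = range ι := by
    rw [range_eq_ker_of_leftInverse hι, ← ker_neg, neg_sub]
  by_contra! hKL
  have hNK : d (range p) < d K :=
    hd.lt_of_lt ι p.rangeRestrict hι.injective p.surjective_rangeRestrict
      (by rw [ker_rangeRestrict, hker]) hKL
  have hKN : d K < d (range p) :=
    hd.lt_of_lt (range p).subtype π (range p).injective_subtype hι.surjective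
      (by rw [Submodule.range_subtype, ker_eq_range_of_comp_eq_id h]) (hNK.trans hKL)
  exact hNK.not_gt hKN

theorem range_single_zero_eq_ker_funLeft_succ (C : Type u) [AddCommGroup C] [Module Λ C]
    (k : ℕ) :
    range (single Λ (fun _ : Fin (k + 1) => C) 0) = ker (funLeft Λ C Fin.succ) := by
  ext v
  constructor
  · rintro ⟨c, rfl⟩
    ext i
    simp [Fin.succ_ne_zero]
  · intro hv
    refine ⟨v 0, funext fun j => Fin.cases ?_ (fun i => ?_) j⟩
    · simp
    · simpa [Fin.succ_ne_zero] using (congrFun hv i).symm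

theorem le_apply_fin_pi (h1 : CondDt1 Λ d) (h3 : CondD3 Λ d)
    (C : Type u) [AddCommGroup C] [Module Λ C] : ∀ k : ℕ, d C ≤ d (Fin k → C)
  | 0 => h1.le_of_comp_eq_id (π := 0) (ι := 0) (Subsingleton.elim _ _)
  | k + 1 =>
    h3.le_of_le _ _ (fun _ _ h => Pi.single_injective 0 h)
      (funLeft_surjective_of_injective Λ C _ (Fin.succ_injective _))
      (range_single_zero_eq_ker_funLeft_succ C k) (le_apply_fin_pi h1 h3 C k)

theorem le_of_isSummandOfCopies (h1 : CondDt1 Λ d) (h3 : CondD3 Λ d)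
    {C C' : Type u} [AddCommGroup C] [Module Λ C] [AddCommGroup C'] [Module Λ C']
    (hC' : IsSummandOfCopies Λ C C') : d C ≤ d C' := by
  obtain ⟨k, ι, π, h⟩ := hC'
  exact (le_apply_fin_pi h1 h3 C k).trans (h1.le_of_comp_eq_id h)

end DFun

theorem stmt12_general (Λ : Type u) [Ring Λ] (S : Type v)
    (d : S → DFun Λ)
    (hdt1 : ∀ p : S, CondDt1 Λ (d p)) (hd3 : ∀ p : S, CondD3 Λ (d p))
    (C : Type u) [AddCommGroup C] [Module Λ C]
    (C' : Type u) [AddCommGroup C'] [Module Λ C']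
    (hC' : IsSummandOfCopies Λ C C') :
    (∀ p : S, d p C ≤ d p C') ∧
    (∀ (i : ℕ) (p : S), min (i : ℕ∞) (d p C) ≤ d p C') ∧
    StildeF Λ d (fun p => d p C) C' = ⊤ ∧
    (∀ i : ℕ, (i : ℕ∞) ≤ TU Λ d {p : S | (i : ℕ∞) ≤ d p C} C') := by
  have hle (p : S) : d p C ≤ d p C' := le_of_isSummandOfCopies (hdt1 p) (hd3 p) hC'
  have hmin (i : ℕ) (p : S) : min (i : ℕ∞) (d p C) ≤ d p C' := (min_le_right _ _).trans (hle p)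
  refine ⟨hle, hmin, ?_, fun i => le_iInf fun p => p.2.trans (hle p)⟩
  exact ENat.eq_top_iff_forall_ge.2 fun i => le_sSup ⟨i, rfl, hmin i⟩

/-- Proposition 2.3(1).  If each `d_p` satisfies (d̃1) and (d3) and `C'` is a
direct summand of a finite direct sum of copies of `C`, then `d_p(C') ≥ d_p(C)`
for all `p`; in particular `d_p(C') ≥ min(i, d_p(C))` for every `i` and `p`,
`S̃^C(C') = ∞`, and `i ≤ T^{X_i(C)}(C')` for every `i`,
where `X_i(C) = { p ∈ S | d_p(C) ≥ i }`. -/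
theorem stmt12 (Λ : Type u) [Ring Λ] (S : Type v) [Nonempty S]
    (d : S → DFun Λ)
    (hdt1 : ∀ p : S, CondDt1 Λ (d p)) (hd3 : ∀ p : S, CondD3 Λ (d p))
    (C : Type u) [AddCommGroup C] [Module Λ C]
    (C' : Type u) [AddCommGroup C'] [Module Λ C']
    (hC' : IsSummandOfCopies Λ C C') :
    (∀ p : S, d p C ≤ d p C') ∧
    (∀ (i : ℕ) (p : S), min (i : ℕ∞) (d p C) ≤ d p C') ∧
    StildeF Λ d (fun p => d p C) C' = ⊤ ∧
    (∀ i : ℕ, (i : ℕ∞) ≤ TU Λ d {p : S | (i : ℕ∞) ≤ d p C} C') :=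
  stmt12_general Λ S d hdt1 hd3 C C' hC'
end
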